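/- arXiv:1409.5782 — 3 statements merged into one kernel-verified Lean document; each statement's English description precedes it below -/
import Mathlib

section
/- If L ⊂ ℝⁿ is a convex body centrally symmetric with respect to the origin (L = −L), then ξ_B(L) = 2·w_B(L): the shortest closed billiard trajectory in L is a segment realizing the width, traversed back and forth. -/
open scoped RealInnerProductSpace Pointwise
open MeasureTheory

/-- A convex body: compact, convex, with nonempty interior. -/
def IsConvexBody {n : ℕ} (K : Set (EuclideanSpace ℝ (Fin n))) : Prop :=
  IsCompact K ∧ Convex ℝ K ∧ (interior K).Nonempty

/-- The (possibly non-symmetric) norm with unit ball `T°`: `‖v‖_T = max_{p ∈ T} ⟨p, v⟩`. -/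
noncomputable def suppNorm {n : ℕ} (T : Set (EuclideanSpace ℝ (Fin n)))
    (v : EuclideanSpace ℝ (Fin n)) : ℝ :=
  sSup ((fun p => ⟪p, v⟫) '' T)

/-- The vertex set `q 0, …, q (m-1)` cannot be translated into the interior of `K`. -/
def NotTranslatableInto {n : ℕ} (m : ℕ) (q : ℕ → EuclideanSpace ℝ (Fin n))
    (K : Set (EuclideanSpace ℝ (Fin n))) : Prop :=
  ∀ t : EuclideanSpace ℝ (Fin n), ∃ i < m, q i + t ∉ interior K

/-- `ξ_T(K)`: the length of the shortest closed billiard trajectory in `K` with geometry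
given by `T`, characterized à la Bezdek–Bezdek as the infimum of `ℓ_T`-lengths of closed
polygonal lines whose vertex set cannot be translated into the interior of `K`. -/
noncomputable def xi {n : ℕ} (T K : Set (EuclideanSpace ℝ (Fin n))) : ℝ :=
  sInf {ℓ : ℝ | ∃ m : ℕ, 2 ≤ m ∧ ∃ q : ℕ → EuclideanSpace ℝ (Fin n),
    NotTranslatableInto m q K ∧
    ℓ = ∑ i ∈ Finset.range m, suppNorm T (q ((i + 1) % m) - q i)}

/-- `ξ_B(K)`: the Euclidean version of `xi`. -/
noncomputable def xiB {n : ℕ} (K : Set (EuclideanSpace ℝ (Fin n))) : ℝ :=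
  sInf {ℓ : ℝ | ∃ m : ℕ, 2 ≤ m ∧ ∃ q : ℕ → EuclideanSpace ℝ (Fin n),
    NotTranslatableInto m q K ∧
    ℓ = ∑ i ∈ Finset.range m, ‖q ((i + 1) % m) - q i‖}

/-- The Euclidean width of `K`: the minimum over unit directions of the breadth. -/
noncomputable def widthB {n : ℕ} (K : Set (EuclideanSpace ℝ (Fin n))) : ℝ :=
  sInf {w : ℝ | ∃ p : EuclideanSpace ℝ (Fin n), ‖p‖ = 1 ∧
    w = sSup ((fun q => ⟪p, q⟫) '' K) - sInf ((fun q => ⟪p, q⟫) '' K)}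

/-- The polar body `K° = {p : ⟨p, q⟩ ≤ 1 ∀ q ∈ K}`. -/
def polarBody {n : ℕ} (K : Set (EuclideanSpace ℝ (Fin n))) :
    Set (EuclideanSpace ℝ (Fin n)) :=
  {p | ∀ q ∈ K, ⟪p, q⟫ ≤ 1}

/-!
A segment realising the width, traversed back and forth, cannot be translated into the interior
of a convex body, so `ξ_B ≤ 2 w_B`. Conversely, a closed polygonal line of length `ℓ` lies in a
ball of radius `ℓ / 4`, while for `L = -L` every supporting hyperplane of `L` is at distance at
least `w_B / 2` from the origin, so the open ball of that radius about `0` lies in the interior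
of `L`. A line with `ℓ < 2 w_B` could therefore be translated into the interior of `L`.
-/

open Finset Filter Topology

section Polygon

variable {E : Type*} [NormedAddCommGroup E] [NormedSpace ℝ E]

lemma exists_le_and_le_succ {α : Type*} [LinearOrder α] {u : ℕ → α} {c : α} (h0 : u 0 ≤ c) :
    ∀ m, c ≤ u (m + 1) → ∃ k ≤ m, u k ≤ c ∧ c ≤ u (k + 1)
  | 0, h => ⟨0, le_rfl, h0, h⟩
  | m + 1, h => by
    rcases le_or_gt c (u (m + 1)) with hc | hc
    · obtain ⟨k, hk, hck⟩ := exists_le_and_le_succ h0 m hc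
      exact ⟨k, hk.trans m.le_succ, hck⟩
    · exact ⟨m + 1, le_rfl, hc.le, h⟩

lemma exists_dist_eq_of_le_dist {x y : E} {t : ℝ} (ht₀ : 0 ≤ t) (ht : t ≤ dist x y) :
    ∃ z, dist x z = t ∧ dist z y = dist x y - t := by
  have hc : t / dist x y * dist x y = t :=
    div_mul_cancel_of_imp fun h => le_antisymm (h ▸ ht) ht₀
  have hc₀ : 0 ≤ t / dist x y := div_nonneg ht₀ dist_nonneg
  have hc₁ : t / dist x y ≤ 1 := div_le_one_of_le₀ ht dist_nonneg
  refine ⟨AffineMap.lineMap x y (t / dist x y), ?_, ?_⟩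
  · rw [dist_comm, dist_lineMap_left, Real.norm_of_nonneg hc₀, hc]
  · rw [dist_lineMap_right, Real.norm_of_nonneg (by linarith), sub_mul, one_mul, hc]

lemma dist_midpoint_le (x a b : E) : dist x (midpoint ℝ a b) ≤ (dist x a + dist x b) / 2 := by
  simpa using dist_midpoint_midpoint_le x x a b

/-- Centre: the midpoint of `Q 0` and the point `b` halfway along the line. Each vertex lies on one
of the two arcs joining `Q 0` to `b`, so its distances to them sum to at most half the length. -/
theorem exists_dist_le_sum_dist_div_four {Q : ℕ → E} {m : ℕ} (hm : 0 < m) (hQ : Q m = Q 0) :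
    ∃ o, ∀ i ≤ m, dist (Q i) o ≤ (∑ j ∈ range m, dist (Q j) (Q (j + 1))) / 4 := by
  set s : ℕ → ℝ := fun i => ∑ j ∈ range i, dist (Q j) (Q (j + 1)) with hs
  change ∃ o, ∀ i ≤ m, dist (Q i) o ≤ s m / 4
  have hchain {a b : ℕ} (hab : a ≤ b) : dist (Q a) (Q b) ≤ s b - s a := by
    rw [hs, ← sum_Ico_eq_sub _ hab]
    exact dist_le_Ico_sum_dist Q hab
  have hs₀ : s 0 = 0 := sum_range_zero _
  have hsm : 0 ≤ s m := sum_nonneg fun _ _ => dist_nonneg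
  obtain ⟨k, hk, hsk, hsk'⟩ := exists_le_and_le_succ (u := s) (c := s m / 2) (by linarith) (m - 1)
    (by rw [Nat.sub_add_cancel hm]; linarith)
  have hstep : s (k + 1) = s k + dist (Q k) (Q (k + 1)) := sum_range_succ _ _
  obtain ⟨b, hkb, hbk⟩ := exists_dist_eq_of_le_dist (x := Q k) (y := Q (k + 1))
    (t := s m / 2 - s k) (by linarith) (by linarith)
  refine ⟨midpoint ℝ (Q 0) b, fun i hi => (dist_midpoint_le _ _ _).trans ?_⟩
  rcases le_or_gt i k with hik | hki
  · have h₁ := hchain (Nat.zero_le i)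
    have h₂ := hchain hik
    have h₃ := dist_triangle (Q i) (Q k) b
    rw [dist_comm] at h₁
    linarith
  · have h₁ := hchain hi
    have h₂ := hchain (Nat.succ_le_of_lt hki)
    have h₃ := dist_triangle (Q i) (Q (k + 1)) b
    rw [hQ] at h₁
    rw [dist_comm (Q (k + 1))] at h₂ h₃
    linarith

theorem exists_norm_sub_le_cyclic_sum_div_four (q : ℕ → E) {m : ℕ} (hm : 0 < m) :
    ∃ o, ∀ i < m, ‖q i - o‖ ≤ (∑ i ∈ range m, ‖q ((i + 1) % m) - q i‖) / 4 := by
  obtain ⟨o, ho⟩ := exists_dist_le_sum_dist_div_four (Q := fun i => q (i % m)) hm (by simp)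
  refine ⟨o, fun i hi => ?_⟩
  have hsum : ∑ j ∈ range m, dist (q (j % m)) (q ((j + 1) % m)) =
      ∑ j ∈ range m, ‖q ((j + 1) % m) - q j‖ :=
    sum_congr rfl fun j hj => by rw [Nat.mod_eq_of_lt (mem_range.mp hj), dist_comm, dist_eq_norm]
  have h := ho i hi.le
  rwa [hsum, Nat.mod_eq_of_lt hi, dist_eq_norm] at h

end Polygon

section Support

variable {E : Type*} [NormedAddCommGroup E] [InnerProductSpace ℝ E]

noncomputable def breadth (K : Set E) (p : E) : ℝ :=
  sSup ((fun q => ⟪p, q⟫) '' K) - sInf ((fun q => ⟪p, q⟫) '' K)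

lemma breadth_nonneg {K : Set E} (hK : IsCompact K) (hne : K.Nonempty) (p : E) :
    0 ≤ breadth K p := by
  have himg := hK.image (by fun_prop : Continuous fun q => ⟪p, q⟫)
  exact sub_nonneg.mpr (csInf_le_csSup (hne.image _) himg.bddBelow himg.bddAbove)

lemma breadth_of_eq_neg {K : Set E} (hK : K = -K) (p : E) :
    breadth K p = 2 * sSup ((fun q => ⟪p, q⟫) '' K) := by
  have himg : (fun q => ⟪p, q⟫) '' K = -((fun q => ⟪p, q⟫) '' K) := by
    conv_lhs => rw [hK]
    exact Set.image_neg_of_apply_neg_eq_neg fun q _ => inner_neg_right p q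
  rw [breadth, Real.sInf_def, ← himg]
  ring

lemma inner_lt_sSup_of_mem_interior {K : Set E} {p y : E}
    (hK : BddAbove ((fun q => ⟪p, q⟫) '' K)) (hp : p ≠ 0) (hy : y ∈ interior K) :
    ⟪p, y⟫ < sSup ((fun q => ⟪p, q⟫) '' K) := by
  have hnhds : ∀ᶠ t in 𝓝[>] (0 : ℝ), y + t • p ∈ K := by
    have hcont : Tendsto (fun t : ℝ => y + t • p) (𝓝 0) (𝓝 y) := by
      simpa using (Continuous.tendsto (f := fun t : ℝ => y + t • p) (by fun_prop) 0)
    exact nhdsWithin_le_nhds (hcont (mem_interior_iff_mem_nhds.mp hy))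
  obtain ⟨t, htK, ht⟩ := (hnhds.and self_mem_nhdsWithin).exists
  calc ⟪p, y⟫ < ⟪p, y + t • p⟫ := by
        rw [inner_add_right, real_inner_smul_right, real_inner_self_eq_norm_sq]
        exact lt_add_of_pos_right _ (mul_pos ht (pow_pos (norm_pos_iff.mpr hp) 2))
    _ ≤ _ := le_csSup hK ⟨_, htK, rfl⟩

lemma sInf_lt_inner_of_mem_interior {K : Set E} {p y : E}
    (hK : BddBelow ((fun q => ⟪p, q⟫) '' K)) (hp : p ≠ 0) (hy : y ∈ interior K) :
    sInf ((fun q => ⟪p, q⟫) '' K) < ⟪p, y⟫ := by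
  have himg : (fun q => ⟪-p, q⟫) '' K = -((fun q => ⟪p, q⟫) '' K) := by
    simp only [inner_neg_left]
    rw [← Set.image_neg_eq_neg, Set.image_image]
  have := inner_lt_sSup_of_mem_interior (p := -p) (by rwa [himg, bddAbove_neg])
    (neg_ne_zero.mpr hp) hy
  rw [himg, Real.sSup_neg, inner_neg_left] at this
  linarith

lemma mem_of_forall_inner_le_sSup [CompleteSpace E] {K : Set E} (hconv : Convex ℝ K)
    (hclosed : IsClosed K) (hne : K.Nonempty) {x : E}
    (hx : ∀ p : E, ‖p‖ = 1 → ⟪p, x⟫ ≤ sSup ((fun q => ⟪p, q⟫) '' K)) : x ∈ K := by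
  by_contra hxK
  obtain ⟨f, u, hfK, hux⟩ := geometric_hahn_banach_closed_point hconv hclosed hxK
  set v : E := (InnerProductSpace.toDual ℝ E).symm f
  have hfv (y : E) : f y = ⟪v, y⟫ := InnerProductSpace.toDual_symm_apply.symm
  have hv : 0 < ‖v‖ := by
    refine norm_pos_iff.mpr fun hv0 => ?_
    obtain ⟨a, ha⟩ := hne
    have := hfK a ha
    simp only [hfv, hv0, inner_zero_left] at this hux
    linarith
  have hsup : sSup ((fun q => ⟪‖v‖⁻¹ • v, q⟫) '' K) ≤ ‖v‖⁻¹ * u := by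
    refine csSup_le (hne.image _) ?_
    rintro _ ⟨a, ha, rfl⟩
    dsimp only
    rw [real_inner_smul_left, ← hfv]
    exact mul_le_mul_of_nonneg_left (hfK a ha).le (inv_nonneg.mpr hv.le)
  have hxv := hx (‖v‖⁻¹ • v) (by rw [norm_smul, norm_inv, norm_norm, inv_mul_cancel₀ hv.ne'])
  rw [real_inner_smul_left, ← hfv] at hxv
  have := mul_lt_mul_of_pos_left hux (inv_pos.mpr hv)
  linarith

end Support

section Euclidean

variable {n : ℕ}

lemma widthB_le_breadth {K : Set (EuclideanSpace ℝ (Fin n))} (hK : IsCompact K)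
    (hne : K.Nonempty) {p : EuclideanSpace ℝ (Fin n)} (hp : ‖p‖ = 1) :
    widthB K ≤ breadth K p := by
  refine csInf_le ⟨0, ?_⟩ ⟨p, hp, rfl⟩
  rintro _ ⟨p', -, rfl⟩
  exact breadth_nonneg hK hne p'

lemma ball_widthB_subset_interior {L : Set (EuclideanSpace ℝ (Fin n))} (hcomp : IsCompact L)
    (hconv : Convex ℝ L) (hne : L.Nonempty) (hsymm : L = -L) :
    Metric.ball 0 (widthB L / 2) ⊆ interior L := by
  refine interior_maximal (fun x hx => ?_) Metric.isOpen_ball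
  refine mem_of_forall_inner_le_sSup hconv hcomp.isClosed hne fun p hp => ?_
  have hwidth := widthB_le_breadth hcomp hne hp
  rw [breadth_of_eq_neg hsymm] at hwidth
  have hpx := real_inner_le_norm p x
  rw [hp, one_mul] at hpx
  rw [mem_ball_zero_iff] at hx
  linarith

def untranslatableLengths (K : Set (EuclideanSpace ℝ (Fin n))) : Set ℝ :=
  {ℓ | ∃ m : ℕ, 2 ≤ m ∧ ∃ q : ℕ → EuclideanSpace ℝ (Fin n),
    NotTranslatableInto m q K ∧ ℓ = ∑ i ∈ range m, ‖q ((i + 1) % m) - q i‖}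

lemma xiB_eq_sInf_untranslatableLengths (K : Set (EuclideanSpace ℝ (Fin n))) :
    xiB K = sInf (untranslatableLengths K) := rfl

lemma nonneg_of_mem_untranslatableLengths {K : Set (EuclideanSpace ℝ (Fin n))} {ℓ : ℝ}
    (hℓ : ℓ ∈ untranslatableLengths K) : 0 ≤ ℓ := by
  obtain ⟨m, -, q, -, rfl⟩ := hℓ
  positivity

/-- The segment from `0` to `breadth K p • p`, traversed back and forth. -/
lemma two_mul_breadth_mem_untranslatableLengths {K : Set (EuclideanSpace ℝ (Fin n))}
    (hK : IsCompact K) (hne : K.Nonempty) {p : EuclideanSpace ℝ (Fin n)} (hp : ‖p‖ = 1) :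
    2 * breadth K p ∈ untranslatableLengths K := by
  have himg := hK.image (by fun_prop : Continuous fun q => ⟪p, q⟫)
  have hp0 : p ≠ 0 := norm_ne_zero_iff.mp (by rw [hp]; exact one_ne_zero)
  refine ⟨2, le_rfl, fun i => if i = 0 then 0 else breadth K p • p, fun t => ?_, ?_⟩
  · by_contra! ht
    have h₀ := sInf_lt_inner_of_mem_interior himg.bddBelow hp0 (by simpa using ht 0 two_pos)
    have h₁ := inner_lt_sSup_of_mem_interior himg.bddAbove hp0 (by simpa using ht 1 one_lt_two)
    rw [inner_add_right, real_inner_smul_right, real_inner_self_eq_norm_sq, hp, breadth] at h₁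
    linarith
  · simp [sum_range_succ, norm_smul, hp, abs_of_nonneg (breadth_nonneg hK hne p)]
    ring

lemma two_mul_widthB_le_of_mem_untranslatableLengths {L : Set (EuclideanSpace ℝ (Fin n))}
    (hcomp : IsCompact L) (hconv : Convex ℝ L) (hne : L.Nonempty) (hsymm : L = -L) {ℓ : ℝ}
    (hℓ : ℓ ∈ untranslatableLengths L) : 2 * widthB L ≤ ℓ := by
  obtain ⟨m, hm, q, hq, rfl⟩ := hℓ
  by_contra! hlt
  obtain ⟨o, ho⟩ := exists_norm_sub_le_cyclic_sum_div_four q (by omega : 0 < m)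
  obtain ⟨i, hi, hqi⟩ := hq (-o)
  refine hqi (ball_widthB_subset_interior hcomp hconv hne hsymm ?_)
  rw [mem_ball_zero_iff, ← sub_eq_add_neg]
  linarith [ho i hi]

lemma xiB_le_two_mul_widthB [Nontrivial (EuclideanSpace ℝ (Fin n))]
    {K : Set (EuclideanSpace ℝ (Fin n))} (hK : IsCompact K) (hne : K.Nonempty) :
    xiB K ≤ 2 * widthB K := by
  obtain ⟨p, hp⟩ := exists_norm_eq (EuclideanSpace ℝ (Fin n)) zero_le_one
  suffices xiB K / 2 ≤ widthB K by linarith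
  refine le_csInf ⟨_, p, hp, rfl⟩ ?_
  rintro _ ⟨p', hp', rfl⟩
  change xiB K / 2 ≤ breadth K p'
  have := csInf_le ⟨0, fun _ => nonneg_of_mem_untranslatableLengths⟩
    (two_mul_breadth_mem_untranslatableLengths hK hne hp')
  rw [← xiB_eq_sInf_untranslatableLengths] at this
  linarith

lemma two_mul_widthB_le_xiB [Nontrivial (EuclideanSpace ℝ (Fin n))]
    {L : Set (EuclideanSpace ℝ (Fin n))} (hcomp : IsCompact L) (hconv : Convex ℝ L)
    (hne : L.Nonempty) (hsymm : L = -L) :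
    2 * widthB L ≤ xiB L := by
  obtain ⟨p, hp⟩ := exists_norm_eq (EuclideanSpace ℝ (Fin n)) zero_le_one
  exact le_csInf ⟨_, two_mul_breadth_mem_untranslatableLengths hcomp hne hp⟩
    fun _ => two_mul_widthB_le_of_mem_untranslatableLengths hcomp hconv hne hsymm

lemma widthB_of_subsingleton [Subsingleton (EuclideanSpace ℝ (Fin n))]
    (K : Set (EuclideanSpace ℝ (Fin n))) : widthB K = 0 := by
  rw [widthB, ← Real.sInf_empty]
  congr 1
  refine Set.eq_empty_of_forall_notMem ?_
  rintro _ ⟨p, hp, -⟩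
  rw [Subsingleton.elim p 0, norm_zero] at hp
  exact zero_ne_one hp

lemma xiB_of_subsingleton [Subsingleton (EuclideanSpace ℝ (Fin n))]
    (K : Set (EuclideanSpace ℝ (Fin n))) : xiB K = 0 := by
  refine le_antisymm (Real.sInf_nonpos ?_)
    (Real.sInf_nonneg fun _ => nonneg_of_mem_untranslatableLengths)
  rintro _ ⟨m, -, q, -, rfl⟩
  exact sum_nonpos fun _ _ => norm_le_zero_iff.mpr (Subsingleton.elim _ _)

end Euclidean

/-- For a centrally symmetric convex body `L`, the shortest closed billiard trajectory
has length twice the width: `ξ_B(L) = 2 w_B(L)`. -/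
theorem xiB_centrally_symmetric (n : ℕ) (L : Set (EuclideanSpace ℝ (Fin n)))
    (hL : IsConvexBody L) (hsymm : L = -L) :
    xiB L = 2 * widthB L := by
  obtain ⟨hcomp, hconv, hint⟩ := hL
  have hne : L.Nonempty := hint.mono interior_subset
  rcases subsingleton_or_nontrivial (EuclideanSpace ℝ (Fin n)) with _ | _
  · rw [xiB_of_subsingleton, widthB_of_subsingleton, mul_zero]
  · exact (xiB_le_two_mul_widthB hcomp hne).antisymm
      (two_mul_widthB_le_xiB hcomp hconv hne hsymm)
end

section
/- Symmetry of the shortest billiard trajectory length: for convex bodies K, T ⊂ ℝⁿ, each containing the origin in its interior, ξ_T(K) = ξ_K(T). -/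
open scoped RealInnerProductSpace Pointwise
open MeasureTheory

/-!
By Hahn–Banach separation in `Eᵐ`, vertices `q i` that cannot be translated into `int K` admit
vectors `p i`, not all zero, with `∑ p i = 0` and `∑ ‖p i‖_K ≤ ∑ ⟪p i, q i⟫`; conversely such
`p` for `T` forbid translating into `int T`. Given `q` and its `p`, take the closed polygon whose
edges are the `p i`, traversed backwards and rescaled: its `K`-length is at most the `T`-length
of `q`, and by Abel summation the edges of `q` are vectors of this kind for it and `T`. Hence
`ξ_K(T) ≤ ξ_T(K)`, and the reverse inequality is symmetric.
-/

open Finset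

section CyclicSums

variable {m : ℕ} [NeZero m] {M : Type*} [AddCommMonoid M]

theorem sum_range_eq_sum_zmod (F : ℕ → M) :
    ∑ i ∈ range m, F i = ∑ i : ZMod m, F i.val :=
  sum_nbij' (fun i => (i : ZMod m)) ZMod.val (by simp) (by simp [ZMod.val_lt])
    (fun i hi => by simp [ZMod.val_natCast, Nat.mod_eq_of_lt (mem_range.1 hi)])
    (fun i _ => ZMod.natCast_zmod_val i)
    (fun i hi => by simp [ZMod.val_natCast, Nat.mod_eq_of_lt (mem_range.1 hi)])

theorem sum_comp_add_one (F : ZMod m → M) : ∑ i, F (i + 1) = ∑ i, F i :=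
  Equiv.sum_comp (Equiv.addRight 1) F

theorem sum_comp_neg (F : ZMod m → M) : ∑ i, F (-i) = ∑ i, F i :=
  Equiv.sum_comp (Equiv.neg _) F

theorem ZMod.val_add_one_eq (i : ZMod m) : (i + 1).val = (i.val + 1) % m := by
  rw [ZMod.val_add, ZMod.val_one_eq_one_mod, Nat.add_mod_mod]

theorem exists_add_one_sub_eq {G : Type*} [AddCommGroup G] {d : ZMod m → G}
    (hd : ∑ i, d i = 0) : ∃ V : ZMod m → G, ∀ i, V (i + 1) - V i = d i := by
  refine ⟨fun i => ∑ j ∈ range i.val, d j, fun i => ?_⟩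
  simp only [ZMod.val_add_one_eq]
  rcases (show i.val + 1 ≤ m from ZMod.val_lt i).lt_or_eq with hlt | heq
  · rw [Nat.mod_eq_of_lt hlt, sum_range_succ, ZMod.natCast_zmod_val, add_sub_cancel_left]
  · have hfull : ∑ j ∈ range (i.val + 1), d j = 0 := by
      rw [heq, sum_range_eq_sum_zmod]
      simpa only [ZMod.natCast_zmod_val] using hd
    rw [sum_range_succ, ZMod.natCast_zmod_val] at hfull
    rw [heq, Nat.mod_self, sum_range_zero, zero_sub, eq_neg_of_add_eq_zero_left hfull, neg_neg]

theorem sum_inner_sub_eq_of_sub_eq_neg {F : Type*} [NormedAddCommGroup F] [InnerProductSpace ℝ F]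
    {x V p : ZMod m → F} (hV : ∀ i, V (i + 1) - V i = -p (i + 1)) :
    ∑ i, ⟪x (i + 1) - x i, V i⟫ = ∑ i, ⟪p i, x i⟫ := by
  have hshift : ∑ i, ⟪x (i + 1), V i⟫ = ∑ i, ⟪x i, V (i - 1)⟫ := by
    rw [← sum_comp_add_one fun i => ⟪x i, V (i - 1)⟫]
    simp only [add_sub_cancel_right]
  simp only [inner_sub_left, sum_sub_distrib, hshift]
  rw [← sum_sub_distrib]
  refine sum_congr rfl fun i _ => ?_
  have := hV (i - 1)
  rw [sub_add_cancel] at this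
  rw [← inner_sub_right, real_inner_comm, ← neg_sub, this, neg_neg]

end CyclicSums

section SupportFunction

variable {n : ℕ} {K : Set (EuclideanSpace ℝ (Fin n))} {p v : EuclideanSpace ℝ (Fin n)}

theorem bddAbove_inner_image (hK : IsCompact K) (v : EuclideanSpace ℝ (Fin n)) :
    BddAbove ((fun p => ⟪p, v⟫) '' K) :=
  (hK.image (continuous_id.inner continuous_const)).bddAbove

theorem inner_le_suppNorm (hK : IsCompact K) (hp : p ∈ K) : ⟪p, v⟫ ≤ suppNorm K v :=
  le_csSup (bddAbove_inner_image hK v) ⟨p, hp, rfl⟩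

theorem exists_inner_eq_suppNorm (hK : IsCompact K) (hne : K.Nonempty)
    (v : EuclideanSpace ℝ (Fin n)) : ∃ p ∈ K, ⟪p, v⟫ = suppNorm K v := by
  obtain ⟨p, hpK, hp⟩ := hK.exists_sSup_image_eq hne
    (f := fun p => ⟪p, v⟫) (continuous_id.inner continuous_const).continuousOn
  exact ⟨p, hpK, hp.symm⟩

theorem suppNorm_nonneg (hK : IsCompact K) (h0 : 0 ∈ K) : 0 ≤ suppNorm K v := by
  simpa using inner_le_suppNorm (v := v) hK h0

theorem suppNorm_smul {c : ℝ} (hc : 0 ≤ c) (v : EuclideanSpace ℝ (Fin n)) :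
    suppNorm K (c • v) = c * suppNorm K v := by
  have : (fun p => ⟪p, c • v⟫) '' K = c • (fun p => ⟪p, v⟫) '' K := by
    rw [← Set.image_smul, Set.image_image]
    simp only [real_inner_smul_right, smul_eq_mul]
  rw [suppNorm, suppNorm, this, Real.sSup_smul_of_nonneg hc, smul_eq_mul]

theorem inner_lt_suppNorm_of_mem_interior (hK : IsCompact K) (hp : p ∈ interior K) (hv : v ≠ 0) :
    ⟪p, v⟫ < suppNorm K v := by
  obtain ⟨δ, hδ, hball⟩ := Metric.isOpen_iff.1 isOpen_interior p hp
  have hv' : 0 < ‖v‖ := norm_pos_iff.2 hv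
  set c := δ / (2 * ‖v‖) with hc
  have hmem : p + c • v ∈ K := by
    refine interior_subset (hball ?_)
    rw [Metric.mem_ball, dist_self_add_left, norm_smul, Real.norm_of_nonneg (by positivity)]
    calc c * ‖v‖ = δ / 2 := by rw [hc]; field_simp
      _ < δ := half_lt_self hδ
  calc ⟪p, v⟫ < ⟪p, v⟫ + c * ‖v‖ ^ 2 := by simp only [lt_add_iff_pos_right]; positivity
    _ = ⟪p + c • v, v⟫ := by rw [inner_add_left, real_inner_smul_left, real_inner_self_eq_norm_sq]
    _ ≤ suppNorm K v := inner_le_suppNorm hK hmem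

theorem suppNorm_pos (hK : IsCompact K) (h0 : 0 ∈ interior K) (hv : v ≠ 0) :
    0 < suppNorm K v := by
  simpa using inner_lt_suppNorm_of_mem_interior hK h0 hv

end SupportFunction

theorem exists_sum_eq_zero_forall_sum_inner_neg {E ι : Type*} [NormedAddCommGroup E]
    [InnerProductSpace ℝ E] [CompleteSpace E] [Fintype ι] {U : Set E} (hU : IsOpen U)
    (hUc : Convex ℝ U) {x : ι → E} (hx : ∀ t, ∃ i, x i + t ∉ U) :
    ∃ p : ι → E, ∑ i, p i = 0 ∧ ∀ y : ι → E, (∀ i, y i ∈ U) → ∑ i, ⟪p i, y i - x i⟫ < 0 := by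
  classical
  set s : Set (ι → E) := Set.univ.pi fun i => (fun y => x i + y) ⁻¹' U
  set D : Set (ι → E) := Set.range fun t _ => t
  have hs_open : IsOpen s :=
    isOpen_set_pi Set.finite_univ fun i _ => hU.preimage (continuous_const_add _)
  have hs_conv : Convex ℝ s := convex_pi fun i _ => hUc.translate_preimage_right _
  have hD_conv : Convex ℝ D := by
    rintro _ ⟨a, rfl⟩ _ ⟨b, rfl⟩ c d - - -
    exact ⟨c • a + d • b, rfl⟩
  have hdisj : Disjoint s D := by
    rw [Set.disjoint_left]
    rintro _ hy ⟨t, rfl⟩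
    obtain ⟨i, hi⟩ := hx t
    exact hi (hy i (Set.mem_univ i))
  obtain ⟨f, u, hfs, hfD⟩ := geometric_hahn_banach_open hs_conv hs_open hD_conv hdisj
  set p : ι → E := fun i =>
    (InnerProductSpace.toDual ℝ E).symm (f.comp (ContinuousLinearMap.single ℝ (fun _ : ι => E) i))
  have hf : ∀ y, f y = ∑ i, ⟪p i, y i⟫ := by
    intro y
    conv_lhs => rw [← Finset.univ_sum_single y]
    simp [p, InnerProductSpace.toDual_symm_apply]
  -- `f` is bounded below on the subspace `D`, so it vanishes there
  have hfD0 : ∀ t, f (fun _ => t) = 0 := by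
    intro t
    by_contra h
    have hc := hfD (((u - 1) / f fun _ => t) • fun _ => t) ⟨((u - 1) / f fun _ => t) • t, rfl⟩
    rw [map_smul, smul_eq_mul, div_mul_cancel₀ _ h] at hc
    linarith
  have hu : u ≤ 0 := by simpa using hfD 0 ⟨0, rfl⟩
  refine ⟨p, ?_, fun y hy => ?_⟩
  · have h := hfD0 (∑ i, p i)
    rw [hf, ← sum_inner] at h
    exact inner_self_eq_zero.1 h
  · rw [← hf]
    exact (hfs _ fun i _ => by simpa using hy i).trans_le hu

section Duality

variable {n : ℕ} {ι : Type*} [Fintype ι] {K T : Set (EuclideanSpace ℝ (Fin n))}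

def IsUntranslatableInto (x : ι → EuclideanSpace ℝ (Fin n)) (K : Set (EuclideanSpace ℝ (Fin n))) :
    Prop :=
  ∀ t, ∃ i, x i + t ∉ interior K

theorem isUntranslatableInto_of_dual (hT : IsCompact T) {x r : ι → EuclideanSpace ℝ (Fin n)}
    (hr : ∑ i, r i = 0) (hr0 : ∃ i, r i ≠ 0)
    (hle : ∑ i, suppNorm T (r i) ≤ ∑ i, ⟪r i, x i⟫) : IsUntranslatableInto x T := by
  intro t
  by_contra! hmem
  obtain ⟨i₀, hi₀⟩ := hr0
  have hlt : ∑ i, ⟪x i + t, r i⟫ < ∑ i, suppNorm T (r i) :=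
    sum_lt_sum (fun i _ => inner_le_suppNorm hT (interior_subset (hmem i)))
      ⟨i₀, mem_univ _, inner_lt_suppNorm_of_mem_interior hT (hmem i₀) hi₀⟩
  have hsplit : ∑ i, ⟪x i + t, r i⟫ = ∑ i, ⟪r i, x i⟫ + ⟪∑ i, r i, t⟫ := by
    simp only [inner_add_left, sum_add_distrib, sum_inner, real_inner_comm]
  rw [hsplit, hr, inner_zero_left, add_zero] at hlt
  exact hlt.not_ge hle

theorem IsUntranslatableInto.exists_dual (hK : IsConvexBody K)
    {x : ι → EuclideanSpace ℝ (Fin n)} (hx : IsUntranslatableInto x K) :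
    ∃ p : ι → EuclideanSpace ℝ (Fin n), ∑ i, p i = 0 ∧ (∃ i, p i ≠ 0) ∧
      ∑ i, suppNorm K (p i) ≤ ∑ i, ⟪p i, x i⟫ := by
  obtain ⟨hKc, hKconv, z, hz⟩ := hK
  obtain ⟨p, hp_sum, hp⟩ :=
    exists_sum_eq_zero_forall_sum_inner_neg isOpen_interior hKconv.interior hx
  refine ⟨p, hp_sum, ?_, ?_⟩
  · by_contra! hp0
    simpa [hp0] using hp (fun _ => z) fun _ => hz
  · choose k hkK hk using fun i => exists_inner_eq_suppNorm hKc ⟨z, interior_subset hz⟩ (p i)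
    have hclosure : closure (Set.univ.pi fun _ => interior K) ⊆ {y | ∑ i, ⟪p i, y i - x i⟫ ≤ 0} :=
      closure_minimal (fun y hy => (hp y fun i => hy i (Set.mem_univ i)).le)
        (isClosed_le (by fun_prop) continuous_const)
    rw [closure_pi_set, hKconv.closure_interior_eq_closure_of_nonempty_interior ⟨z, hz⟩,
      hKc.isClosed.closure_eq] at hclosure
    have h := hclosure fun i _ => hkK i
    simp only [Set.mem_ofPred_eq, inner_sub_right, sum_sub_distrib, sub_nonpos] at h
    simpa only [← hk, real_inner_comm (p _)] using h

end Duality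

section DualPolygon

variable {n m : ℕ} [NeZero m] {K T : Set (EuclideanSpace ℝ (Fin n))}

theorem IsUntranslatableInto.exists_dual_polygon (hK : IsConvexBody K) (hK0 : 0 ∈ interior K)
    (hT : IsCompact T) (hT0 : 0 ∈ T) {x : ZMod m → EuclideanSpace ℝ (Fin n)}
    (hx : IsUntranslatableInto x K) :
    ∃ y : ZMod m → EuclideanSpace ℝ (Fin n), IsUntranslatableInto y T ∧
      ∑ i, suppNorm K (y (i + 1) - y i) ≤ ∑ i, suppNorm T (x (i + 1) - x i) := by
  obtain ⟨p, hp_sum, ⟨i₀, hi₀⟩, hp_le⟩ := hx.exists_dual hK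
  obtain ⟨V, hV⟩ := exists_add_one_sub_eq (d := fun i => -p (i + 1)) <| by
    rw [sum_neg_distrib, sum_comp_add_one p, hp_sum, neg_zero]
  set g : ZMod m → EuclideanSpace ℝ (Fin n) := fun i => x (i + 1) - x i
  set A := ∑ i, ⟪p i, x i⟫
  set ℓ := ∑ i, suppNorm T (g i)
  have hpair : ∑ i, ⟪g i, V i⟫ = A := sum_inner_sub_eq_of_sub_eq_neg hV
  have hA : 0 < A :=
    (sum_pos' (fun i _ => suppNorm_nonneg hK.1 (interior_subset hK0))
      ⟨i₀, mem_univ _, suppNorm_pos hK.1 hK0 hi₀⟩).trans_le hp_le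
  have hℓ : 0 ≤ ℓ := sum_nonneg fun i _ => suppNorm_nonneg hT hT0
  -- the scale at which the edges of `x` certify the new polygon with equality
  set μ := ℓ / A
  have hμ : 0 ≤ μ := div_nonneg hℓ hA.le
  have hedge : ∀ i, μ • V (-(i + 1)) - μ • V (-i) = μ • p (-i) := by
    intro i
    have := hV (-(i + 1))
    rw [show -(i + 1) + 1 = -i by ring] at this
    rw [← smul_sub, ← neg_sub, this, neg_neg]
  refine ⟨fun i => μ • V (-i), ?_, ?_⟩
  · refine isUntranslatableInto_of_dual hT (r := fun i => g (-i)) ?_ ?_ ?_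
    · rw [sum_comp_neg g, sum_sub_distrib, sum_comp_add_one x, sub_self]
    · by_contra! hg
      refine hA.ne' ?_
      rw [← hpair, ← sum_comp_neg]
      simp [hg]
    · have hsum : ∑ i, ⟪g (-i), μ • V (-i)⟫ = μ * A := by
        simp_rw [real_inner_smul_right, ← mul_sum]
        rw [sum_comp_neg fun i => ⟪g i, V i⟫, hpair]
      rw [sum_comp_neg fun i => suppNorm T (g i), hsum, div_mul_cancel₀ _ hA.ne']
  · simp_rw [hedge, suppNorm_smul hμ, ← mul_sum]
    rw [sum_comp_neg fun i => suppNorm K (p i)]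
    calc μ * ∑ i, suppNorm K (p i) ≤ μ * A := mul_le_mul_of_nonneg_left hp_le hμ
      _ = ℓ := div_mul_cancel₀ _ hA.ne'

end DualPolygon

section Bridge

variable {n m : ℕ} [NeZero m] {K T : Set (EuclideanSpace ℝ (Fin n))}

theorem notTranslatableInto_iff {q : ℕ → EuclideanSpace ℝ (Fin n)} :
    NotTranslatableInto m q K ↔ IsUntranslatableInto (fun i : ZMod m => q i.val) K := by
  refine forall_congr' fun t => ⟨fun ⟨i, hi, h⟩ => ⟨i, ?_⟩, fun ⟨i, h⟩ => ⟨i.val, ZMod.val_lt i, h⟩⟩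
  simpa [ZMod.val_natCast, Nat.mod_eq_of_lt hi] using h

theorem sum_range_edges_eq_sum_zmod (N : EuclideanSpace ℝ (Fin n) → ℝ)
    (q : ℕ → EuclideanSpace ℝ (Fin n)) :
    ∑ i ∈ range m, N (q ((i + 1) % m) - q i) = ∑ i : ZMod m, N (q (i + 1).val - q i.val) := by
  simp only [sum_range_eq_sum_zmod, ZMod.val_add_one_eq]

theorem NotTranslatableInto.exists_dual_polygon (hK : IsConvexBody K) (hK0 : 0 ∈ interior K)
    (hT : IsCompact T) (hT0 : 0 ∈ T) {q : ℕ → EuclideanSpace ℝ (Fin n)}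
    (hq : NotTranslatableInto m q K) :
    ∃ q' : ℕ → EuclideanSpace ℝ (Fin n), NotTranslatableInto m q' T ∧
      ∑ i ∈ range m, suppNorm K (q' ((i + 1) % m) - q' i) ≤
        ∑ i ∈ range m, suppNorm T (q ((i + 1) % m) - q i) := by
  obtain ⟨y, hy, hle⟩ := (notTranslatableInto_iff.1 hq).exists_dual_polygon hK hK0 hT hT0
  refine ⟨fun j => y j, notTranslatableInto_iff.2 ?_, ?_⟩
  · simpa only [ZMod.natCast_zmod_val] using hy
  · rw [sum_range_edges_eq_sum_zmod (q := fun j => y j), sum_range_edges_eq_sum_zmod]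
    simpa only [ZMod.natCast_zmod_val] using hle

end Bridge

/-- Symmetry of the shortest billiard trajectory length: `ξ_T(K) = ξ_K(T)`. -/
theorem xi_symm (n : ℕ) (K T : Set (EuclideanSpace ℝ (Fin n)))
    (hK : IsConvexBody K) (hT : IsConvexBody T)
    (hK0 : (0 : EuclideanSpace ℝ (Fin n)) ∈ interior K)
    (hT0 : (0 : EuclideanSpace ℝ (Fin n)) ∈ interior T) :
    xi T K = xi K T := by
  refine csInf_eq_csInf_of_forall_exists_le ?_ ?_
  · rintro _ ⟨m, hm, q, hq, rfl⟩
    have : NeZero m := ⟨by omega⟩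
    obtain ⟨q', hq', hle⟩ := hq.exists_dual_polygon hK hK0 hT.1 (interior_subset hT0)
    exact ⟨_, ⟨m, hm, q', hq', rfl⟩, hle⟩
  · rintro _ ⟨m, hm, q, hq, rfl⟩
    have : NeZero m := ⟨by omega⟩
    obtain ⟨q', hq', hle⟩ := hq.exists_dual_polygon hT hT0 hK.1 (interior_subset hK0)
    exact ⟨_, ⟨m, hm, q', hq', rfl⟩, hle⟩
end

section
/- Brunn–Minkowski type inequality for shortest billiard trajectories: for convex bodies K, L ⊂ ℝⁿ and a convex body T ⊂ ℝⁿ containing the origin in its interior, ξ_T(K + L) ≥ ξ_T(K) + ξ_T(L), where K + L is the Minkowski sum. -/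
open scoped RealInnerProductSpace Pointwise
open MeasureTheory

section Aux

open scoped RealInnerProductSpace Pointwise

variable {n : ℕ}

private lemma inner_right_continuous' (v : EuclideanSpace ℝ (Fin n)) :
    Continuous fun p : EuclideanSpace ℝ (Fin n) => ⟪p, v⟫ :=
  Continuous.inner continuous_id continuous_const

private lemma suppNorm_nonneg' {T : Set (EuclideanSpace ℝ (Fin n))} (hTc : IsCompact T)
    (h0 : (0 : EuclideanSpace ℝ (Fin n)) ∈ T) (v : EuclideanSpace ℝ (Fin n)) :
    0 ≤ suppNorm T v := by
  have hbd : BddAbove ((fun p => ⟪p, v⟫) '' T) :=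
    (hTc.image (inner_right_continuous' v)).bddAbove
  have : (0 : ℝ) ∈ (fun p => ⟪p, v⟫) '' T := ⟨0, h0, by simp⟩
  exact le_csSup hbd this

private lemma suppNorm_smul' {T : Set (EuclideanSpace ℝ (Fin n))} (hTc : IsCompact T)
    (hTne : T.Nonempty) {s : ℝ} (hs : 0 ≤ s) (v : EuclideanSpace ℝ (Fin n)) :
    suppNorm T (s • v) = s * suppNorm T v := by
  have himg : (fun p => ⟪p, s • v⟫) '' T = (fun x : ℝ => s * x) '' ((fun p => ⟪p, v⟫) '' T) := by
    rw [Set.image_image]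
    simp only [real_inner_smul_right]
  have hmono : Monotone (fun x : ℝ => s * x) :=
    fun a b hab => mul_le_mul_of_nonneg_left hab hs
  have hcont : ContinuousAt (fun x : ℝ => s * x) (sSup ((fun p => ⟪p, v⟫) '' T)) :=
    (continuous_const.mul continuous_id).continuousAt
  rw [suppNorm, himg, suppNorm,
    ← Monotone.map_csSup_of_continuousAt hcont hmono (hTne.image _)
      (hTc.image (inner_right_continuous' v)).bddAbove]

private lemma interior_add_interior_subset' (K L : Set (EuclideanSpace ℝ (Fin n))) :
    interior K + interior L ⊆ interior (K + L) :=
  interior_maximal (Set.add_subset_add interior_subset interior_subset)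
    (IsOpen.add_right isOpen_interior)

/-- Key splitting lemma: if the vertex set of `q` cannot be translated into `int (K + L)`,
then there is `s ∈ [0,1]` such that `s • q` cannot be translated into `int K` and
`(1 - s) • q` cannot be translated into `int L`.  This follows by a connectedness
argument, since the sets of good parameters `s` for `K` and for `L` are open, disjoint
(as `s • q i + (1-s) • q i = q i`), and contain `0` and `1` respectively. -/
private lemma exists_split' {K L : Set (EuclideanSpace ℝ (Fin n))}
    (hKi : (interior K).Nonempty) (hLi : (interior L).Nonempty)
    {m : ℕ} {q : ℕ → EuclideanSpace ℝ (Fin n)}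
    (hq : NotTranslatableInto m q (K + L)) :
    ∃ s : ℝ, 0 ≤ s ∧ s ≤ 1 ∧
      NotTranslatableInto m (fun i => s • q i) K ∧
      NotTranslatableInto m (fun i => (1 - s) • q i) L := by
  set U : Set ℝ := ⋃ t : EuclideanSpace ℝ (Fin n),
    {s : ℝ | ∀ i < m, s • q i + t ∈ interior K} with hU
  set V : Set ℝ := ⋃ t : EuclideanSpace ℝ (Fin n),
    {s : ℝ | ∀ i < m, (1 - s) • q i + t ∈ interior L} with hV
  have hopen : ∀ (M : Set (EuclideanSpace ℝ (Fin n))) (c : ℝ → ℝ),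
      Continuous c → IsOpen (⋃ t : EuclideanSpace ℝ (Fin n),
        {s : ℝ | ∀ i < m, c s • q i + t ∈ interior M}) := by
    intro M c hc
    apply isOpen_iUnion
    intro t
    have : {s : ℝ | ∀ i < m, c s • q i + t ∈ interior M}
        = ⋂ i ∈ Set.Iio m, (fun s : ℝ => c s • q i + t) ⁻¹' interior M := by
      ext s; simp [Set.mem_iInter]
    rw [this]
    exact (Set.finite_Iio m).isOpen_biInter fun i _ =>
      isOpen_interior.preimage ((hc.smul continuous_const).add continuous_const)
  have hUopen : IsOpen U := hopen K id continuous_id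
  have hVopen : IsOpen V := hopen L (fun s => 1 - s) (continuous_const.sub continuous_id)
  have hsum : interior K + interior L ⊆ interior (K + L) :=
    interior_add_interior_subset' K L
  have hdisj : ∀ s : ℝ, s ∈ U → s ∈ V → False := by
    intro s hsU hsV
    obtain ⟨AU, ⟨t1, rfl⟩, ht1⟩ := hsU
    obtain ⟨AV, ⟨t2, rfl⟩, ht2⟩ := hsV
    obtain ⟨i, him, hnot⟩ := hq (t1 + t2)
    apply hnot
    have hkey : s • q i + (1 - s) • q i = q i := by
      rw [← add_smul]; simp
    have : (s • q i + t1) + ((1 - s) • q i + t2) = q i + (t1 + t2) := by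
      rw [add_add_add_comm, hkey]
    rw [← this]
    exact hsum (Set.add_mem_add (ht1 i him) (ht2 i him))
  by_contra hcon
  push_neg at hcon
  have hcover : Set.Icc (0 : ℝ) 1 ⊆ U ∪ V := by
    intro s hs
    by_contra hsnot
    simp only [Set.mem_union, not_or] at hsnot
    obtain ⟨h1, h2⟩ := hsnot
    refine absurd (hcon s hs.1 hs.2) ?_
    push_neg
    constructor
    · intro t
      by_contra hball
      push_neg at hball
      exact h1 ⟨_, ⟨t, rfl⟩, fun i him => hball i him⟩
    · intro t
      by_contra hball
      push_neg at hball
      exact h2 ⟨_, ⟨t, rfl⟩, fun i him => hball i him⟩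
  have h0U : (0 : ℝ) ∈ U := by
    obtain ⟨x, hx⟩ := hKi
    exact ⟨_, ⟨x, rfl⟩, fun i _ => by simpa using hx⟩
  have h1V : (1 : ℝ) ∈ V := by
    obtain ⟨x, hx⟩ := hLi
    exact ⟨_, ⟨x, rfl⟩, fun i _ => by simpa using hx⟩
  obtain ⟨s, hs, hsU, hsV⟩ := isPreconnected_Icc (a := (0:ℝ)) (b := 1) U V hUopen hVopen
    hcover ⟨0, Set.left_mem_Icc.2 zero_le_one, h0U⟩ ⟨1, Set.right_mem_Icc.2 zero_le_one, h1V⟩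
  exact hdisj s hsU hsV

end Aux

/-- Brunn–Minkowski type inequality for shortest billiard trajectories:
`ξ_T(K + L) ≥ ξ_T(K) + ξ_T(L)`. -/
theorem xi_add_ge (n : ℕ) (K L T : Set (EuclideanSpace ℝ (Fin n)))
    (hK : IsConvexBody K) (hL : IsConvexBody L) (hT : IsConvexBody T)
    (hT0 : (0 : EuclideanSpace ℝ (Fin n)) ∈ interior T) :
    xi T K + xi T L ≤ xi T (K + L) := by
  have hT0' : (0 : EuclideanSpace ℝ (Fin n)) ∈ T := interior_subset hT0
  have hTne : T.Nonempty := ⟨0, hT0'⟩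
  have hKLi : (interior (K + L)).Nonempty := by
    obtain ⟨x, hx⟩ := hK.2.2
    obtain ⟨y, hy⟩ := hL.2.2
    exact ⟨x + y, interior_add_interior_subset' K L (Set.add_mem_add hx hy)⟩
  rcases subsingleton_or_nontrivial (EuclideanSpace ℝ (Fin n)) with hsub | hnt
  · -- degenerate case: the space is a point, so all the defining sets are empty.
    have hempty : ∀ M : Set (EuclideanSpace ℝ (Fin n)), (interior M).Nonempty →
        {ℓ : ℝ | ∃ m : ℕ, 2 ≤ m ∧ ∃ q : ℕ → EuclideanSpace ℝ (Fin n),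
          NotTranslatableInto m q M ∧
          ℓ = ∑ i ∈ Finset.range m, suppNorm T (q ((i + 1) % m) - q i)} = ∅ := by
      intro M hMi
      obtain ⟨x, hx⟩ := hMi
      rw [Set.eq_empty_iff_forall_notMem]
      rintro ℓ ⟨m, hm, q, hq, -⟩
      obtain ⟨i, him, hnot⟩ := hq 0
      exact hnot (by rwa [Subsingleton.elim (q i + 0) x])
    simp only [xi, hempty K hK.2.2, hempty L hL.2.2, hempty (K + L) hKLi, Real.sInf_empty]
    norm_num
  · -- main case
    have hbdd : ∀ M : Set (EuclideanSpace ℝ (Fin n)), BddBelow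
        {ℓ : ℝ | ∃ m : ℕ, 2 ≤ m ∧ ∃ q : ℕ → EuclideanSpace ℝ (Fin n),
          NotTranslatableInto m q M ∧
          ℓ = ∑ i ∈ Finset.range m, suppNorm T (q ((i + 1) % m) - q i)} := by
      intro M
      refine ⟨0, ?_⟩
      rintro ℓ ⟨m, hm, q, hq, rfl⟩
      exact Finset.sum_nonneg fun i _ => suppNorm_nonneg' hT.1 hT0' _
    -- the defining set of `xi T (K + L)` is nonempty
    have hne : {ℓ : ℝ | ∃ m : ℕ, 2 ≤ m ∧ ∃ q : ℕ → EuclideanSpace ℝ (Fin n),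
        NotTranslatableInto m q (K + L) ∧
        ℓ = ∑ i ∈ Finset.range m, suppNorm T (q ((i + 1) % m) - q i)}.Nonempty := by
      obtain ⟨x, hx⟩ := exists_ne (0 : EuclideanSpace ℝ (Fin n))
      obtain ⟨C, hC⟩ := isBounded_iff_forall_norm_le.1 (hK.1.add hL.1).isBounded
      set v : EuclideanSpace ℝ (Fin n) := ((2 * |C| + 2) / ‖x‖) • x with hv
      have hxnorm : ‖x‖ ≠ 0 := norm_ne_zero_iff.2 hx
      have hvnorm : ‖v‖ = 2 * |C| + 2 := by
        rw [hv, norm_smul, Real.norm_eq_abs, abs_div, abs_of_nonneg (by positivity),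
          abs_of_nonneg (norm_nonneg x), div_mul_cancel₀ _ hxnorm]
      set q : ℕ → EuclideanSpace ℝ (Fin n) := fun i => if i = 0 then 0 else v with hqdef
      have hntr : NotTranslatableInto 2 q (K + L) := by
        intro t
        by_contra hcon
        push_neg at hcon
        have h0 := hcon 0 (by norm_num)
        have h1 := hcon 1 (by norm_num)
        simp only [hqdef] at h0 h1
        norm_num at h0 h1
        have ht : ‖t‖ ≤ |C| :=
          le_trans (hC t (interior_subset h0)) (le_abs_self C)
        have hvt : ‖v + t‖ ≤ |C| :=
          le_trans (hC (v + t) (interior_subset h1)) (le_abs_self C)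
        have : ‖v‖ ≤ ‖v + t‖ + ‖t‖ := by
          calc ‖v‖ = ‖(v + t) - t‖ := by rw [add_sub_cancel_right]
          _ ≤ ‖v + t‖ + ‖t‖ := norm_sub_le _ _
        rw [hvnorm] at this
        linarith
      exact ⟨_, 2, le_refl 2, q, hntr, rfl⟩
    apply le_csInf hne
    rintro ℓ ⟨m, hm, q, hq, rfl⟩
    obtain ⟨s, hs0, hs1, hqK, hqL⟩ := exists_split' hK.2.2 hL.2.2 hq
    have hscale : ∀ r : ℝ, 0 ≤ r →
        (∑ i ∈ Finset.range m,
          suppNorm T ((fun j => r • q j) ((i + 1) % m) - (fun j => r • q j) i))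
        = r * ∑ i ∈ Finset.range m, suppNorm T (q ((i + 1) % m) - q i) := by
      intro r hr
      rw [Finset.mul_sum]
      refine Finset.sum_congr rfl fun i _ => ?_
      simp only
      rw [← smul_sub, suppNorm_smul' hT.1 hTne hr]
    have h1 : xi T K ≤ s * ∑ i ∈ Finset.range m, suppNorm T (q ((i + 1) % m) - q i) := by
      rw [← hscale s hs0]
      exact csInf_le (hbdd K) ⟨m, hm, fun j => s • q j, hqK, rfl⟩
    have h2 : xi T L ≤ (1 - s) * ∑ i ∈ Finset.range m, suppNorm T (q ((i + 1) % m) - q i) := by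
      rw [← hscale (1 - s) (by linarith)]
      exact csInf_le (hbdd L) ⟨m, hm, fun j => (1 - s) • q j, hqL, rfl⟩
    have hsplit : s * (∑ i ∈ Finset.range m, suppNorm T (q ((i + 1) % m) - q i))
        + (1 - s) * (∑ i ∈ Finset.range m, suppNorm T (q ((i + 1) % m) - q i))
        = ∑ i ∈ Finset.range m, suppNorm T (q ((i + 1) % m) - q i) := by ring
    linarith
end
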